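/- Let n ≥ 1, r ≥ 1, m ≥ 1, and let a ∈ {0,r}^d. For all faces F^1,…,F^m of P(K_n) such that a lies in the Minkowski sum F^1 + ⋯ + F^m, there exist subsets S^1,…,S^m ⊆ [n] with a_{S^b} ∈ F^b for every b ∈ [m] (i.e. a_{S^b} is a vertex of F^b) and a = ∑_{b=1}^m a_{S^b}. -/

import Mathlib

/-- Edges of the complete graph `K_n`: 2-element subsets of `Fin n`,
encoded as non-diagonal elements of `Sym2 (Fin n)`. -/
abbrev EdgeKn (n : ℕ) : Type := {e : Sym2 (Fin n) // ¬ e.IsDiag}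

/-- Coordinates of `ℝ^d`, `d = n + n(n-1)/2`: vertices and edges of `K_n`. -/
abbrev CoordKn (n : ℕ) : Type := Fin n ⊕ EdgeKn n

/-- The edge coordinate `{i,j}` for distinct `i, j`. -/
def edgeCoord {n : ℕ} (i j : Fin n) (h : i ≠ j) : CoordKn n :=
  Sum.inr ⟨s(i, j), fun hd => h (Sym2.mk_isDiag_iff.mp hd)⟩

/-- The characteristic vector `a_S` of `S ⊆ [n]`. -/
def charVec {n : ℕ} (S : Finset (Fin n)) : CoordKn n → ℝ
  | Sum.inl i => if i ∈ S then 1 else 0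
  | Sum.inr e => Sym2.lift ⟨fun i j => if i ∈ S ∧ j ∈ S then (1 : ℝ) else 0,
      fun i j => by simp [and_comm]⟩ e.1

/-- The standard inner product on `ℝ^d`. -/
def dotP {n : ℕ} (x y : CoordKn n → ℝ) : ℝ := ∑ c, x c * y c

/-- `S` is in the demand set `D(w, p)`: it maximizes `⟨w - p, a_T⟩` over all `T ⊆ [n]`. -/
def InDemand {n : ℕ} (w p : CoordKn n → ℝ) (S : Finset (Fin n)) : Prop :=
  ∀ T : Finset (Fin n),
    dotP (fun c => w c - p c) (charVec T) ≤ dotP (fun c => w c - p c) (charVec S)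

/-- The correlation polytope `P(K_n)`. -/
def corrPolytope (n : ℕ) : Set (CoordKn n → ℝ) :=
  convexHull ℝ (Set.range (charVec (n := n)))

/-- The dilate `m·A` of a set `A ⊆ ℝ^d`. -/
def dilate {n : ℕ} (m : ℕ) (A : Set (CoordKn n → ℝ)) : Set (CoordKn n → ℝ) :=
  {x | ∃ y ∈ A, x = (m : ℝ) • y}

/-- `F` is a face of `P(K_n)`: the set of maximizers of some linear functional `⟨c, ·⟩`. -/
def IsFaceOf {n : ℕ} (F : Set (CoordKn n → ℝ)) : Prop :=
  ∃ c : CoordKn n → ℝ,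
    F = {x | x ∈ corrPolytope n ∧ ∀ y ∈ corrPolytope n, dotP c y ≤ dotP c x}

/-!
Write each `x^b ∈ F^b` as a convex combination `∑_S w^b_S a_S`; every `a_S` with `w^b_S > 0`
is a vertex of `F^b`, and the total weights `μ_S = ∑_b w^b_S` satisfy `a = ∑_S μ_S a_S`.
Since `a ∈ {0,r}^d`, two sets of positive total weight sharing a vertex `i` coincide: for `j`
in one of them, `a_{ij} > 0` forces `a_{ij} = a_i = r`, so every set of positive weight
containing `i` contains `j`. Hence `μ_S = a_i ∈ {0, r}` for `S ∋ i`, so every column sum of the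
matrix `(w^b_S)` is an integer (the column of `∅` because the total is `m`). Its rows are
probability vectors, so Hall's theorem picks `S^b` with `w^b_{S^b} > 0` such that every `S` is
picked exactly `μ_S` times, whence `∑_b a_{S^b} = ∑_S μ_S a_S = a`.
-/

open Finset

theorem eq_zero_of_sum_mul_eq_zero {ι : Type*} [Fintype ι] {w g : ι → ℝ}
    (hw : ∀ i, 0 ≤ w i) (hg : ∀ i, 0 ≤ g i) (hsum : ∑ i, w i * g i = 0) {i : ι}
    (hi : 0 < w i) : g i = 0 :=
  (mul_eq_zero.mp ((sum_eq_zero_iff_of_nonneg fun j _ => mul_nonneg (hw j) (hg j)).mp hsum i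
    (mem_univ i))).resolve_left hi.ne'

theorem forall_exists_nat_eq_of_sum_eq_nat {κ : Type*} [Fintype κ] [DecidableEq κ]
    {v : κ → ℝ} (hv : ∀ k, 0 ≤ v k) {m : ℕ} (hsum : ∑ k, v k = m) (k₀ : κ)
    (hnat : ∀ k ≠ k₀, ∃ N : ℕ, v k = N) : ∀ k, ∃ N : ℕ, v k = N := by
  intro k
  rcases eq_or_ne k k₀ with rfl | hk
  · have hfloor : ∀ k' ∈ univ.erase k, v k' = (⌊v k'⌋₊ : ℝ) := fun k' hk' => by
      obtain ⟨N, hN⟩ := hnat k' (ne_of_mem_erase hk')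
      rw [hN, Nat.floor_natCast]
    set M := ∑ k' ∈ univ.erase k, ⌊v k'⌋₊
    have hk : v k = m - M := by
      rw [← hsum, ← add_sum_erase _ _ (mem_univ k), sum_congr rfl hfloor]
      push_cast [M]
      ring
    have hM : M ≤ m := by exact_mod_cast sub_nonneg.mp (hk ▸ hv k)
    exact ⟨m - M, by rw [hk, Nat.cast_sub hM]⟩
  · exact hnat k hk

/-- Integrality of the transportation polytope. -/
theorem exists_fun_card_fiber_eq {ι κ : Type*} [Fintype ι] [Fintype κ] [DecidableEq ι]
    [DecidableEq κ] (w : ι → κ → ℝ) (hw : ∀ i k, 0 ≤ w i k) (hrow : ∀ i, ∑ k, w i k = 1)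
    (N : κ → ℕ) (hcol : ∀ k, ∑ i, w i k = N k) :
    ∃ f : ι → κ, (∀ i, 0 < w i (f i)) ∧ ∀ k, #{i | f i = k} = N k := by
  -- Hall's theorem, with `N k` slots for each column `k`
  let slots (k : κ) : Finset (κ × ℕ) := {k} ×ˢ range (N k)
  have mem_slots {k p} : p ∈ slots k ↔ p.1 = k ∧ p.2 < N k := by
    simp only [slots, mem_product, mem_singleton, mem_range]
  have card_biUnion_slots (A : Finset κ) : #(A.biUnion slots) = ∑ k ∈ A, N k := by
    rw [card_biUnion fun k _ k' _ hne => disjoint_left.mpr fun p hp hp' =>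
      hne ((mem_slots.mp hp).1.symm.trans (mem_slots.mp hp').1)]
    simp [slots]
  let support (s : Finset ι) : Finset κ := univ.filter fun k => ∃ i ∈ s, 0 < w i k
  let t (i : ι) : Finset (κ × ℕ) := (support {i}).biUnion slots
  have hall (s : Finset ι) : #s ≤ #(s.biUnion t) := by
    have hst : s.biUnion t = (support s).biUnion slots := by
      ext p
      simp only [t, support, mem_biUnion, mem_filter, mem_univ, true_and, mem_singleton]
      aesop
    rw [hst, card_biUnion_slots]
    have hreal : (#s : ℝ) ≤ ∑ k ∈ support s, (N k : ℝ) := calc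
      (#s : ℝ) = ∑ k, ∑ i ∈ s, w i k := by
        rw [sum_comm]
        simp [hrow]
      _ = ∑ k ∈ support s, ∑ i ∈ s, w i k := by
        refine (sum_filter_of_ne fun k _ hk => ?_).symm
        obtain ⟨i, hi, hne⟩ := exists_ne_zero_of_sum_ne_zero hk
        exact ⟨i, hi, (hw i k).lt_of_ne' hne⟩
      _ ≤ ∑ k ∈ support s, (N k : ℝ) := by
        gcongr with k
        rw [← hcol k]
        exact sum_le_sum_of_subset_of_nonneg (subset_univ s) fun i _ _ => hw i k
    exact_mod_cast hreal
  obtain ⟨g, hg_inj, hg_mem⟩ := (all_card_le_biUnion_card_iff_exists_injective t).mp hall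
  have hg (i : ι) : 0 < w i (g i).1 ∧ (g i).2 < N (g i).1 := by
    obtain ⟨k, hk, hgk⟩ := mem_biUnion.mp (hg_mem i)
    obtain ⟨rfl, hlt⟩ := mem_slots.mp hgk
    simp only [support, mem_filter, mem_singleton, exists_eq_left] at hk
    exact ⟨hk.2, hlt⟩
  refine ⟨fun i => (g i).1, fun i => (hg i).1, ?_⟩
  have hle (k : κ) : #{i | (g i).1 = k} ≤ N k := by
    refine (card_le_card_of_injOn (fun i => (g i).2) (t := range (N k)) ?_ ?_).trans_eq
      (card_range _)
    · intro i hi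
      simp only [coe_filter, mem_univ, true_and, Set.mem_ofPred_eq] at hi
      simpa [← hi] using (hg i).2
    · intro i hi i' hi' h
      simp only [coe_filter, mem_univ, true_and, Set.mem_ofPred_eq] at hi hi'
      exact hg_inj (Prod.ext (hi.trans hi'.symm) h)
  have htotal : ∑ k, #{i | (g i).1 = k} = ∑ k, N k := by
    rw [← card_eq_sum_card_fiberwise fun i _ => mem_univ _]
    have : (∑ k, N k : ℝ) = Fintype.card ι := by
      simp_rw [← hcol]
      rw [sum_comm]
      simp [hrow]
    exact_mod_cast this.symm
  exact fun k => (sum_eq_sum_iff_of_le fun k _ => hle k).mp htotal k (mem_univ k)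

section CorrPolytope

variable {n : ℕ}

theorem charVec_inl (S : Finset (Fin n)) (i : Fin n) :
    charVec S (Sum.inl i) = if i ∈ S then 1 else 0 := rfl

theorem charVec_edgeCoord (S : Finset (Fin n)) {i j : Fin n} (h : i ≠ j) :
    charVec S (edgeCoord i j h) = if i ∈ S ∧ j ∈ S then 1 else 0 := by
  simp [charVec, edgeCoord]

theorem charVec_edgeCoord_le_inl (S : Finset (Fin n)) {i j : Fin n} (h : i ≠ j) :
    charVec S (edgeCoord i j h) ≤ charVec S (Sum.inl i) := by
  rw [charVec_inl, charVec_edgeCoord]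
  split_ifs <;> simp_all

theorem charVec_nonneg (S : Finset (Fin n)) (c : CoordKn n) : 0 ≤ charVec S c := by
  rcases c with i | ⟨e, he⟩
  · rw [charVec_inl]
    split_ifs <;> norm_num
  · induction e using Sym2.ind with
    | _ i j =>
      simp only [charVec, Sym2.lift_mk]
      split_ifs <;> norm_num

theorem dotP_sum_smul_charVec (c : CoordKn n → ℝ) (w : Finset (Fin n) → ℝ) :
    dotP c (∑ T, w T • charVec T) = ∑ T, w T * dotP c (charVec T) := by
  simp only [dotP, Finset.sum_apply, Pi.smul_apply, smul_eq_mul, mul_sum]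
  rw [sum_comm]
  exact sum_congr rfl fun T _ => sum_congr rfl fun k _ => by ring

theorem charVec_mem_corrPolytope (S : Finset (Fin n)) : charVec S ∈ corrPolytope n :=
  subset_convexHull ℝ _ (Set.mem_range_self S)

theorem exists_convex_weights_of_mem_corrPolytope {x : CoordKn n → ℝ}
    (hx : x ∈ corrPolytope n) :
    ∃ w : Finset (Fin n) → ℝ,
      (∀ S, 0 ≤ w S) ∧ ∑ S, w S = 1 ∧ ∑ S, w S • charVec S = x := by
  classical
  rw [corrPolytope, mem_convexHull_iff_exists_fintype] at hx
  obtain ⟨ι, _, v, z, hv0, hv1, hz, rfl⟩ := hx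
  choose g hg using hz
  refine ⟨fun S => ∑ i, if g i = S then v i else 0, fun S => ?_, ?_, ?_⟩
  · exact sum_nonneg fun i _ => by split_ifs <;> simp [hv0 i]
  · rw [sum_comm]
    simpa [sum_ite_eq'] using hv1
  · simp only [sum_smul, ite_smul, zero_smul]
    rw [sum_comm]
    simp [hg]

theorem IsFaceOf.subset_corrPolytope {F : Set (CoordKn n → ℝ)} (hF : IsFaceOf F) :
    F ⊆ corrPolytope n := by
  obtain ⟨c, rfl⟩ := hF
  exact fun x hx => hx.1

theorem IsFaceOf.charVec_mem_of_weight_pos {F : Set (CoordKn n → ℝ)} (hF : IsFaceOf F)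
    {w : Finset (Fin n) → ℝ} (hw0 : ∀ S, 0 ≤ w S) (hw1 : ∑ S, w S = 1)
    (hx : ∑ S, w S • charVec S ∈ F) {S : Finset (Fin n)} (hS : 0 < w S) : charVec S ∈ F := by
  obtain ⟨c, rfl⟩ := hF
  obtain ⟨-, hmax⟩ := hx
  have hle (T : Finset (Fin n)) := hmax _ (charVec_mem_corrPolytope T)
  have hgap : ∑ T, w T * (dotP c (∑ S, w S • charVec S) - dotP c (charVec T)) = 0 := by
    simp only [mul_sub, sum_sub_distrib, ← sum_mul, hw1, one_mul, ← dotP_sum_smul_charVec,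
      sub_self]
  have heq := eq_zero_of_sum_mul_eq_zero hw0 (fun T => sub_nonneg.mpr (hle T)) hgap hS
  exact ⟨charVec_mem_corrPolytope S, fun y hy => (sub_eq_zero.mp heq).symm ▸ hmax y hy⟩

section Decomposition

variable {a : CoordKn n → ℝ} {r : ℝ} {μ : Finset (Fin n) → ℝ}

theorem apply_eq_sum_mul_charVec (hμa : ∑ S, μ S • charVec S = a) (c : CoordKn n) :
    a c = ∑ S, μ S * charVec S c := by
  simp [← hμa, Finset.sum_apply]

theorem mem_of_mem_of_weight_pos (hμ : ∀ S, 0 ≤ μ S) (ha : ∀ c, a c = 0 ∨ a c = r)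
    (hμa : ∑ S, μ S • charVec S = a) {S T : Finset (Fin n)} (hS : 0 < μ S) (hT : 0 < μ T)
    {i j : Fin n} (hiS : i ∈ S) (hiT : i ∈ T) (hjS : j ∈ S) : j ∈ T := by
  rcases eq_or_ne i j with rfl | hij
  · exact hiT
  set e := edgeCoord i j hij
  have hcoord := apply_eq_sum_mul_charVec hμa
  have he_pos : 0 < a e := by
    refine hS.trans_le ?_
    calc μ S = μ S * charVec S e := by simp [e, charVec_edgeCoord, hiS, hjS]
      _ ≤ a e := hcoord e ▸
        single_le_sum (fun T _ => mul_nonneg (hμ T) (charVec_nonneg T e)) (mem_univ S)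
  have he : a e = r := (ha e).resolve_left he_pos.ne'
  have he_le : a e ≤ a (Sum.inl i) := by
    rw [hcoord, hcoord]
    exact sum_le_sum fun U _ =>
      mul_le_mul_of_nonneg_left (charVec_edgeCoord_le_inl U hij) (hμ U)
  have hi : a (Sum.inl i) = r := (ha _).resolve_left (by linarith)
  have hgap : ∑ U, μ U * (charVec U (Sum.inl i) - charVec U e) = 0 := by
    simp only [mul_sub, sum_sub_distrib, ← hcoord, hi, he, sub_self]
  have := eq_zero_of_sum_mul_eq_zero hμ
    (fun U => sub_nonneg.mpr (charVec_edgeCoord_le_inl U hij)) hgap hT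
  by_contra hjT
  simp [charVec_inl, charVec_edgeCoord, hiT, hjT] at this

theorem weight_eq_zero_or_eq (hμ : ∀ S, 0 ≤ μ S) (ha : ∀ c, a c = 0 ∨ a c = r)
    (hμa : ∑ S, μ S • charVec S = a) {S : Finset (Fin n)} (hne : S.Nonempty) :
    μ S = 0 ∨ μ S = r := by
  rcases (hμ S).eq_or_lt with h0 | hS
  · exact Or.inl h0.symm
  obtain ⟨i, hi⟩ := hne
  have hai : a (Sum.inl i) = μ S := by
    rw [apply_eq_sum_mul_charVec hμa, sum_eq_single S]
    · simp [charVec_inl, hi]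
    · intro T _ hTS
      rcases (hμ T).eq_or_lt with h0 | hT
      · simp [← h0]
      have hiT : i ∉ T := fun hiT => hTS <| Subset.antisymm
        (fun j hj => mem_of_mem_of_weight_pos hμ ha hμa hT hS hiT hi hj)
        (fun j hj => mem_of_mem_of_weight_pos hμ ha hμa hS hT hi hiT hj)
      simp [charVec_inl, hiT]
    · exact fun h => absurd (mem_univ S) h
  rcases ha (Sum.inl i) with h | h <;> [linarith; exact Or.inr (hai ▸ h)]

end Decomposition

end CorrPolytope

theorem stmt9_general (n r m : ℕ)
    (a : CoordKn n → ℝ) (haval : ∀ c, a c = 0 ∨ a c = (r : ℝ))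
    (F : Fin m → Set (CoordKn n → ℝ)) (hF : ∀ b, IsFaceOf (F b))
    (hsum : ∃ x : Fin m → (CoordKn n → ℝ), (∀ b, x b ∈ F b) ∧ (∑ b, x b) = a) :
    ∃ S : Fin m → Finset (Fin n),
      (∀ b, charVec (S b) ∈ F b) ∧ (∑ b, charVec (S b)) = a := by
  obtain ⟨x, hxF, hxa⟩ := hsum
  choose w hw0 hw1 hwx using fun b =>
    exists_convex_weights_of_mem_corrPolytope ((hF b).subset_corrPolytope (hxF b))
  let μ (S : Finset (Fin n)) : ℝ := ∑ b, w b S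
  have hμ (S : Finset (Fin n)) : 0 ≤ μ S := sum_nonneg fun b _ => hw0 b S
  have hμa : ∑ S, μ S • charVec S = a := by
    simp only [μ, sum_smul]
    rw [sum_comm, ← hxa]
    exact sum_congr rfl fun b _ => hwx b
  have hμm : ∑ S, μ S = m := by
    rw [sum_comm]
    simp [hw1]
  have hμ_nat : ∀ S, ∃ N : ℕ, μ S = N :=
    forall_exists_nat_eq_of_sum_eq_nat hμ hμm ∅ fun S hS =>
      (weight_eq_zero_or_eq hμ haval hμa (nonempty_iff_ne_empty.mpr hS)).elim
        (fun h => ⟨0, by simp [h]⟩) (fun h => ⟨r, h⟩)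
  choose N hN using hμ_nat
  obtain ⟨f, hf_pos, hf_card⟩ := exists_fun_card_fiber_eq w hw0 hw1 N hN
  refine ⟨f, fun b => (hF b).charVec_mem_of_weight_pos (hw0 b) (hw1 b) ((hwx b).symm ▸ hxF b)
    (hf_pos b), ?_⟩
  rw [← hμa, ← sum_fiberwise' univ f charVec]
  simp [hf_card, hN, Nat.cast_smul_eq_nsmul]

/-- **Proposition 4.2.** Let `a ∈ {0,r}^d`. For all faces `F^1, …, F^m` of
`P(K_n)` whose Minkowski sum contains `a`, there exist sets
`S^1, …, S^m ⊆ [n]` with `a_{S^b} ∈ F^b` (a vertex of `F^b`) for every `b`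
and `a = ∑_b a_{S^b}`. -/
theorem stmt9 (n r m : ℕ) (hn : 1 ≤ n) (hr : 1 ≤ r) (hm : 1 ≤ m)
    (a : CoordKn n → ℝ) (haval : ∀ c, a c = 0 ∨ a c = (r : ℝ))
    (F : Fin m → Set (CoordKn n → ℝ)) (hF : ∀ b, IsFaceOf (F b))
    (hsum : ∃ x : Fin m → (CoordKn n → ℝ), (∀ b, x b ∈ F b) ∧ (∑ b, x b) = a) :
    ∃ S : Fin m → Finset (Fin n),
      (∀ b, charVec (S b) ∈ F b) ∧ (∑ b, charVec (S b)) = a :=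
  stmt9_general n r m a haval F hF hsum
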